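/- arXiv:1812.06242 — 6 statements merged into one kernel-verified Lean document; each statement's English description precedes it below -/
import Mathlib

section
/- Let B be a finite Boolean algebra and M a distributive module over B. Define ¬_M(m) := ⋁{x ∈ B | x ∧ m = 0}. Then (M, ¬_M) is a Boolean module over B, i.e., ¬_M(0_M) = 1_B, ¬_M(x ∧ m) = ¬_B(x) ∨ ¬_M(m), and ¬_M(m ∨ n) = ¬_M(m) ∧ ¬_M(n) for all x ∈ B and m, n ∈ M. -/
universe u

/-- A distributive module over a bounded lattice `L`. -/
structure DistribModule (L : Type u) [Lattice L] [OrderTop L] [OrderBot L]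
    (M : Type u) [SemilatticeSup M] [OrderBot M] where
  smul : L → M → M
  smul_mono_left : ∀ ⦃x y : L⦄ (m : M), x ≤ y → smul x m ≤ smul y m
  smul_mono_right : ∀ (x : L) ⦃m n : M⦄, m ≤ n → smul x m ≤ smul x n
  top_smul : ∀ m : M, smul ⊤ m = m
  bot_smul : ∀ m : M, smul ⊥ m = ⊥
  inf_smul : ∀ (x y : L) (m : M), smul (x ⊓ y) m = smul x (smul y m)
  sup_smul : ∀ (x y : L) (m : M), smul (x ⊔ y) m = smul x m ⊔ smul y m
  smul_sup : ∀ (x : L) (m n : M), smul x (m ⊔ n) = smul x m ⊔ smul x n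

/-- A Heyting module over a Heyting algebra `H`: a distributive module such that each
action map `x ↦ x ∧ m` has a right adjoint `(m → -)_M : M → H`. -/
structure HeytingModule (H : Type u) [HeytingAlgebra H]
    (M : Type u) [SemilatticeSup M] [OrderBot M] extends DistribModule H M where
  mimp : M → M → H
  smul_le_iff : ∀ (x : H) (m n : M), smul x m ≤ n ↔ x ≤ mimp m n

/-- A morphism of (distributive/Heyting) modules: preserves `⊥`, finite joins and the action. -/
def IsHom {L : Type u} [Lattice L] [OrderTop L] [OrderBot L]
    {M N : Type u} [SemilatticeSup M] [OrderBot M] [SemilatticeSup N] [OrderBot N]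
    (DM : DistribModule L M) (DN : DistribModule L N) (f : M → N) : Prop :=
  f ⊥ = ⊥ ∧ (∀ m m' : M, f (m ⊔ m') = f m ⊔ f m') ∧
    ∀ (x : L) (m : M), f (DM.smul x m) = DN.smul x (f m)

open scoped Classical

/-- Over a finite Boolean algebra, every distributive module is canonically a Boolean
module, with `¬m := ⋁ {x | x ∧ m = ⊥}`. -/
theorem distribModule_booleanModule (B : Type u) [BooleanAlgebra B] [Fintype B]
    (M : Type u) [SemilatticeSup M] [OrderBot M] (D : DistribModule B M)
    (neg : M → B)
    (hneg : ∀ m : M, neg m = (Finset.univ.filter fun x : B => D.smul x m = ⊥).sup id) :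
    neg ⊥ = ⊤ ∧ (∀ (x : B) (m : M), neg (D.smul x m) = xᶜ ⊔ neg m) ∧
      ∀ m n : M, neg (m ⊔ n) = neg m ⊓ neg n := by
  have h1 : ∀ m : M, D.smul (neg m) m = ⊥ := by
    intro m
    rw [hneg]
    refine Finset.sup_induction (p := fun x => D.smul x m = ⊥) (D.bot_smul m)
      (fun a ha b hb => ?_) (fun x hx => ?_)
    · show D.smul (a ⊔ b) m = ⊥
      rw [D.sup_smul, ha, hb, sup_idem]
    · simpa using (Finset.mem_filter.mp hx).2
  have h2 : ∀ (x : B) (m : M), D.smul x m = ⊥ ↔ x ≤ neg m := by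
    intro x m
    constructor
    · intro hx
      rw [hneg]
      exact Finset.le_sup (f := id) (Finset.mem_filter.mpr ⟨Finset.mem_univ x, hx⟩)
    · intro hx
      exact le_antisymm (le_of_le_of_eq (D.smul_mono_left m hx) (h1 m)) bot_le
  have hsmulbot : ∀ x : B, D.smul x (⊥ : M) = ⊥ := by
    intro x
    have := D.smul_mono_left (⊥ : M) (le_top : x ≤ ⊤)
    rw [D.top_smul] at this
    exact le_antisymm this bot_le
  refine ⟨?_, ?_, ?_⟩
  · exact le_antisymm le_top ((h2 ⊤ ⊥).mp (hsmulbot ⊤))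
  · intro x m
    apply le_antisymm
    · have key : neg (D.smul x m) ⊓ x ≤ neg m := by
        rw [← h2, D.inf_smul]; exact h1 _
      calc neg (D.smul x m) = (neg (D.smul x m) ⊓ x) ⊔ (neg (D.smul x m) ⊓ xᶜ) := by
            rw [← inf_sup_left, sup_compl_eq_top, inf_top_eq]
        _ ≤ xᶜ ⊔ neg m := sup_le (key.trans le_sup_right) (inf_le_right.trans le_sup_left)
    · rw [← h2, D.sup_smul]
      have e1 : D.smul xᶜ (D.smul x m) = ⊥ := by
        rw [← D.inf_smul, compl_inf_self, D.bot_smul]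
      have e2 : D.smul (neg m) (D.smul x m) = ⊥ := by
        rw [← D.inf_smul]
        exact le_antisymm (le_of_le_of_eq (D.smul_mono_left m inf_le_left) (h1 m)) bot_le
      rw [e1, e2, sup_idem]
  · intro m n
    apply le_antisymm
    · refine le_inf ?_ ?_ <;> rw [← h2]
      · refine le_antisymm ?_ bot_le
        calc D.smul (neg (m ⊔ n)) m ≤ D.smul (neg (m ⊔ n)) (m ⊔ n) :=
              D.smul_mono_right _ le_sup_left
          _ = ⊥ := h1 _
      · refine le_antisymm ?_ bot_le
        calc D.smul (neg (m ⊔ n)) n ≤ D.smul (neg (m ⊔ n)) (m ⊔ n) :=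
              D.smul_mono_right _ le_sup_right
          _ = ⊥ := h1 _
    · rw [← h2, D.smul_sup]
      have e1 : D.smul (neg m ⊓ neg n) m = ⊥ :=
        le_antisymm (le_of_le_of_eq (D.smul_mono_left m inf_le_left) (h1 m)) bot_le
      have e2 : D.smul (neg m ⊓ neg n) n = ⊥ :=
        le_antisymm (le_of_le_of_eq (D.smul_mono_left n inf_le_right) (h1 n)) bot_le
      rw [e1, e2, sup_idem]
end

section
/- Let H be a Heyting algebra and g : M → N a morphism of Heyting modules over H. Then g is a monomorphism in the category of Heyting modules over H if and only if the underlying map g is injective. -/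
universe u

/-- `H` as a Heyting module over itself. -/
def selfModule (H : Type u) [HeytingAlgebra H] : HeytingModule H H where
  smul x m := x ⊓ m
  smul_mono_left _ _ m h := inf_le_inf_right m h
  smul_mono_right x _ _ h := inf_le_inf_left x h
  top_smul m := top_inf_eq m
  bot_smul m := bot_inf_eq m
  inf_smul x y m := inf_assoc x y m
  sup_smul x y m := inf_sup_right x y m
  smul_sup x m n := inf_sup_left x m n
  mimp := himp
  smul_le_iff x m n := (le_himp_iff).symm

/-- A morphism of Heyting modules is a monomorphism in the category of Heyting modules
over `H` if and only if the underlying map is injective. -/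
theorem mono_iff_injective (H : Type u) [HeytingAlgebra H]
    (M N : Type u) [SemilatticeSup M] [OrderBot M] [SemilatticeSup N] [OrderBot N]
    (HM : HeytingModule H M) (HN : HeytingModule H N)
    (g : M → N) (hg : IsHom HM.toDistribModule HN.toDistribModule g) :
    (∀ (L : Type u) [SemilatticeSup L] [OrderBot L], ∀ (HL : HeytingModule H L)
        (h₁ h₂ : L → M), IsHom HL.toDistribModule HM.toDistribModule h₁ →
        IsHom HL.toDistribModule HM.toDistribModule h₂ →
        g ∘ h₁ = g ∘ h₂ → h₁ = h₂) ↔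
      Function.Injective g := by
  constructor
  · intro mono m₁ m₂ hm
    have key : (fun c : H => HM.smul c m₁) = (fun c : H => HM.smul c m₂) := by
      apply mono H (selfModule H)
      · exact ⟨HM.bot_smul m₁, fun x y => by simp [selfModule, HM.sup_smul],
          fun x c => by simp [selfModule, HM.inf_smul]⟩
      · exact ⟨HM.bot_smul m₂, fun x y => by simp [selfModule, HM.sup_smul],
          fun x c => by simp [selfModule, HM.inf_smul]⟩
      · funext c
        simp only [Function.comp_apply, hg.2.2, hm]
    have := congrFun key ⊤
    simpa [HM.top_smul] using this
  · intro hinj L _ _ HL h₁ h₂ _ _ hcomp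
    funext l
    exact hinj (congrFun hcomp l)
end

section
/- Let H be a Heyting algebra whose regular elements H¬¬ form a sublattice of H, and let M be a Heyting module over H. Then the set M¬¬ := {m ∈ M | ¬m ∈ H¬¬} is closed under finite joins (including 0_M) and under the action of regular elements: for x ∈ H¬¬ and m ∈ M¬¬, x ∧ m ∈ M¬¬; moreover ¬(x ∧ m) = ¬x ∨ ¬m in this case. -/
universe u

/-- If the regular elements of `H` form a sublattice, then for a Heyting module `M`
the set `M¬¬ = {m | ¬m regular}` is closed under `⊥`, finite joins and the action
of regular elements, and moreover `¬(x ∧ m) = ¬x ∨ ¬m` for `x` regular, `m ∈ M¬¬`. -/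
theorem regular_elements_boolean_module (H : Type u) [HeytingAlgebra H]
    (hsub : ∀ a b : H, aᶜᶜ = a → bᶜᶜ = b → (a ⊔ b)ᶜᶜ = a ⊔ b)
    (M : Type u) [SemilatticeSup M] [OrderBot M] (HM : HeytingModule H M) :
    (HM.mimp (⊥ : M) ⊥)ᶜᶜ = HM.mimp (⊥ : M) ⊥ ∧
    (∀ m n : M, (HM.mimp m ⊥)ᶜᶜ = HM.mimp m ⊥ → (HM.mimp n ⊥)ᶜᶜ = HM.mimp n ⊥ →
      (HM.mimp (m ⊔ n) ⊥)ᶜᶜ = HM.mimp (m ⊔ n) ⊥) ∧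
    ∀ (x : H) (m : M), xᶜᶜ = x → (HM.mimp m ⊥)ᶜᶜ = HM.mimp m ⊥ →
      (HM.mimp (HM.smul x m) ⊥)ᶜᶜ = HM.mimp (HM.smul x m) ⊥ ∧
        HM.mimp (HM.smul x m) ⊥ = xᶜ ⊔ HM.mimp m ⊥ := by
  -- ¬(m ⊔ n) = ¬m ⊓ ¬n
  have hsup : ∀ m n : M, HM.mimp (m ⊔ n) ⊥ = HM.mimp m ⊥ ⊓ HM.mimp n ⊥ := by
    intro m n
    apply le_antisymm
    · refine le_inf ?_ ?_
      · rw [← HM.smul_le_iff]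
        calc HM.smul (HM.mimp (m ⊔ n) ⊥) m
            ≤ HM.smul (HM.mimp (m ⊔ n) ⊥) (m ⊔ n) := HM.smul_mono_right _ le_sup_left
          _ ≤ ⊥ := (HM.smul_le_iff _ _ _).2 le_rfl
      · rw [← HM.smul_le_iff]
        calc HM.smul (HM.mimp (m ⊔ n) ⊥) n
            ≤ HM.smul (HM.mimp (m ⊔ n) ⊥) (m ⊔ n) := HM.smul_mono_right _ le_sup_right
          _ ≤ ⊥ := (HM.smul_le_iff _ _ _).2 le_rfl
    · rw [← HM.smul_le_iff, HM.smul_sup]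
      refine sup_le ?_ ?_
      · calc HM.smul (HM.mimp m ⊥ ⊓ HM.mimp n ⊥) m ≤ HM.smul (HM.mimp m ⊥) m :=
              HM.smul_mono_left _ inf_le_left
          _ ≤ ⊥ := (HM.smul_le_iff _ _ _).2 le_rfl
      · calc HM.smul (HM.mimp m ⊥ ⊓ HM.mimp n ⊥) n ≤ HM.smul (HM.mimp n ⊥) n :=
              HM.smul_mono_left _ inf_le_right
          _ ≤ ⊥ := (HM.smul_le_iff _ _ _).2 le_rfl
  refine ⟨?_, ?_, ?_⟩
  · have h1 : HM.mimp (⊥ : M) ⊥ = ⊤ := by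
      apply le_antisymm le_top
      rw [← HM.smul_le_iff, HM.top_smul]
    rw [h1]; simp
  · intro m n hm hn
    rw [hsup, compl_compl_inf_distrib, hm, hn]
  · intro x m hx hm
    have himp_eq : HM.mimp (HM.smul x m) ⊥ = x ⇨ HM.mimp m ⊥ := by
      apply le_antisymm
      · rw [le_himp_iff, ← HM.smul_le_iff, HM.inf_smul]
        exact (HM.smul_le_iff _ _ _).2 le_rfl
      · rw [← HM.smul_le_iff, ← HM.inf_smul ]
        rw [HM.smul_le_iff]
        exact himp_inf_le
    have heq : x ⇨ HM.mimp m ⊥ = xᶜ ⊔ HM.mimp m ⊥ := by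
      have hreg : (xᶜ ⊔ HM.mimp m ⊥)ᶜᶜ = xᶜ ⊔ HM.mimp m ⊥ := hsub _ _ (compl_compl_compl x) hm
      apply le_antisymm
      · rw [← hreg, compl_sup, hx, le_compl_iff_disjoint_right, disjoint_iff_inf_le]
        calc (x ⇨ HM.mimp m ⊥) ⊓ (x ⊓ (HM.mimp m ⊥)ᶜ)
            = ((x ⇨ HM.mimp m ⊥) ⊓ x) ⊓ (HM.mimp m ⊥)ᶜ := by rw [inf_assoc]
          _ ≤ HM.mimp m ⊥ ⊓ (HM.mimp m ⊥)ᶜ := inf_le_inf_right _ himp_inf_le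
          _ ≤ ⊥ := by simp
      · refine sup_le ?_ le_himp
        rw [le_himp_iff]
        simp
    exact ⟨by rw [himp_eq, heq]; exact hsub _ _ (compl_compl_compl x) hm,
      by rw [himp_eq, heq]⟩
end

section
/- Let H be a finite Heyting algebra, M a Heyting module over H, and 𝒦 = {K_c}_{c∈H} a hereditary system of submodules of M. Define φ_𝒦(m) := ⋀{d ∈ H | m ∈ K_d}. Then φ_𝒦 : M → H is a morphism of Heyting modules: it preserves finite joins and satisfies φ_𝒦(c ∧ m) = c ∧ φ_𝒦(m) for all c ∈ H, m ∈ M. -/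
/-!
The hypotheses make `φ m` the least `d` with `m ∈ K d`, i.e. `m ∈ K d ↔ φ m ≤ d`: the sets `K d`
are closed under finite meets of indices and `K ⊤` is everything, so `m ∈ K (φ m)`, and `K` is
monotone.
Each identity for `φ` is then checked against an arbitrary upper bound `d`: hereditariness of
`K d` gives `φ (m ⊔ n) ≤ d ↔ φ m ⊔ φ n ≤ d`, and the quotient condition together with the
adjunction `c ⊓ - ⊣ c ⇨ -` gives `φ (c • m) ≤ d ↔ c ⊓ φ m ≤ d`.
-/

universe u

/-- A hereditary submodule: a downward-closed sub-join-semilattice containing `⊥`. -/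
def Hereditary {M : Type u} [SemilatticeSup M] [OrderBot M] (S : Set M) : Prop :=
  ⊥ ∈ S ∧ (∀ m n : M, m ∈ S → n ∈ S → m ⊔ n ∈ S) ∧ ∀ m n : M, n ∈ S → m ≤ n → m ∈ S

open scoped Classical

theorem Hereditary.sup_mem_iff {M : Type u} [SemilatticeSup M] [OrderBot M] {S : Set M}
    (hS : Hereditary S) {m n : M} : m ⊔ n ∈ S ↔ m ∈ S ∧ n ∈ S :=
  ⟨fun h => ⟨hS.2.2 _ _ h le_sup_left, hS.2.2 _ _ h le_sup_right⟩,
    fun h => hS.2.1 _ _ h.1 h.2⟩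

section

variable {H M : Type u} [HeytingAlgebra H] {K : H → Set M} {φ : M → H}

theorem monotone_of_inter_eq (hinter : ∀ c d, K c ∩ K d = K (c ⊓ d)) : Monotone K :=
  fun c d hcd => by
    rw [← inf_eq_left.mpr hcd, ← hinter]
    exact Set.inter_subset_right

theorem mem_top_of_quot [Bot M] (smul : H → M → M) (hbot : ∀ m, smul ⊥ m = ⊥)
    (hquot : ∀ c d, {m | smul c m ∈ K d} = K (c ⇨ d)) (h : ⊥ ∈ K ⊤) (m : M) : m ∈ K ⊤ := by
  rwa [← bot_himp ⊤, ← hquot, Set.mem_ofPred_eq, hbot]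

theorem inf_filter_mem_le_iff [Fintype H] (hinter : ∀ c d, K c ∩ K d = K (c ⊓ d))
    (htop : ∀ m, m ∈ K ⊤) (m : M) (d : H) :
    (Finset.univ.filter fun d => m ∈ K d).inf id ≤ d ↔ m ∈ K d := by
  refine ⟨fun h => monotone_of_inter_eq hinter h ?_, fun h => Finset.inf_le (by simp [h])⟩
  exact Finset.inf_induction (p := (m ∈ K ·)) (htop m)
    (fun a ha b hb => hinter a b ▸ ⟨ha, hb⟩) (fun b hb => (Finset.mem_filter.mp hb).2)

theorem map_bot_of_le_iff_mem [Bot M] (hφ : ∀ m d, φ m ≤ d ↔ m ∈ K d) (hbot : ⊥ ∈ K ⊥) :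
    φ ⊥ = ⊥ :=
  le_bot_iff.mp ((hφ ⊥ ⊥).mpr hbot)

theorem map_sup_of_le_iff_mem [SemilatticeSup M] [OrderBot M] (hφ : ∀ m d, φ m ≤ d ↔ m ∈ K d)
    (hK : ∀ d, Hereditary (K d)) (m n : M) : φ (m ⊔ n) = φ m ⊔ φ n :=
  eq_of_forall_ge_iff fun d => by
    rw [hφ, (hK d).sup_mem_iff, sup_le_iff, hφ, hφ]

theorem map_smul_of_le_iff_mem (hφ : ∀ m d, φ m ≤ d ↔ m ∈ K d) (smul : H → M → M)
    (hquot : ∀ c d, {m | smul c m ∈ K d} = K (c ⇨ d)) (c : H) (m : M) :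
    φ (smul c m) = c ⊓ φ m :=
  eq_of_forall_ge_iff fun d => by
    rw [hφ, ← le_himp_iff', hφ, ← hquot, Set.mem_ofPred_eq]

end

/-- Over a finite Heyting algebra, a hereditary system of submodules `{K_c}` gives rise
to a morphism of Heyting modules `φ(m) = ⋀ {d | m ∈ K_d}`. -/
theorem hom_of_hereditary_system (H : Type u) [HeytingAlgebra H] [Fintype H]
    (M : Type u) [SemilatticeSup M] [OrderBot M] (HM : HeytingModule H M)
    (K : H → Set M) (hher : ∀ c : H, Hereditary (K c))
    (hinter : ∀ c d : H, K c ∩ K d = K (c ⊓ d))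
    (hquot : ∀ c d : H, {m : M | HM.smul c m ∈ K d} = K (c ⇨ d))
    (φ : M → H)
    (hφ : ∀ m : M, φ m = (Finset.univ.filter fun d : H => m ∈ K d).inf id) :
    φ ⊥ = ⊥ ∧ (∀ m n : M, φ (m ⊔ n) = φ m ⊔ φ n) ∧
      ∀ (c : H) (m : M), φ (HM.smul c m) = c ⊓ φ m := by
  have htop : ∀ m, m ∈ K ⊤ := mem_top_of_quot HM.smul HM.bot_smul hquot (hher ⊤).1
  have hle_iff : ∀ m d, φ m ≤ d ↔ m ∈ K d := fun m d => by
    rw [hφ]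
    exact inf_filter_mem_le_iff hinter htop m d
  exact ⟨map_bot_of_le_iff_mem hle_iff (hher ⊥).1, map_sup_of_le_iff_mem hle_iff hher,
    map_smul_of_le_iff_mem hle_iff HM.smul hquot⟩
end

section
/- Let M be a Heyting module over a Boolean algebra H and K ⊆ M a hereditary submodule. For c ∈ H set K_c := (K : ¬c) = {m ∈ M | ¬c ∧ m ∈ K}. Then {K_c}_{c∈H} is a hereditary system of submodules of M: each K_c is hereditary, K_c ∩ K_d = K_{c∧d}, and (K_d : c) = K_{(c→d)} where (c→d) = ¬c ∨ d. Moreover every hereditary system on M arises this way from K = K_0, giving a bijection between hereditary systems of submodules of M and hereditary submodules of M. -/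
universe u

/-- Over a Boolean algebra `H`, hereditary systems of submodules of a Heyting module
`M` correspond to hereditary submodules of `M` via `K_c := (K : ¬c)` and `K = K_0`. -/
theorem hereditary_system_boolean (H : Type u) [BooleanAlgebra H]
    (M : Type u) [SemilatticeSup M] [OrderBot M] (HM : HeytingModule H M)
    (K : Set M) (hK : Hereditary K) :
    (∀ c : H, Hereditary {m : M | HM.smul cᶜ m ∈ K}) ∧
    (∀ c d : H, {m : M | HM.smul cᶜ m ∈ K} ∩ {m : M | HM.smul dᶜ m ∈ K} =
      {m : M | HM.smul (c ⊓ d)ᶜ m ∈ K}) ∧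
    (∀ c d : H, {m : M | HM.smul c m ∈ {m : M | HM.smul dᶜ m ∈ K}} =
      {m : M | HM.smul (cᶜ ⊔ d)ᶜ m ∈ K}) ∧
    ({m : M | HM.smul (⊥ : H)ᶜ m ∈ K} = K) ∧
    ∀ K' : H → Set M, (∀ c : H, Hereditary (K' c)) →
      (∀ c d : H, K' c ∩ K' d = K' (c ⊓ d)) →
      (∀ c d : H, {m : M | HM.smul c m ∈ K' d} = K' (c ⇨ d)) →
      ∀ c : H, K' c = {m : M | HM.smul cᶜ m ∈ K' ⊥} := by
  have smul_bot : ∀ x : H, HM.smul x ⊥ = ⊥ := by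
    intro x
    have := HM.inf_smul x ⊥ (⊥ : M)
    rw [HM.bot_smul, inf_bot_eq, HM.bot_smul] at this
    exact this.symm
  obtain ⟨hbot, hsup, hdown⟩ := hK
  have hered : ∀ c : H, Hereditary {m : M | HM.smul cᶜ m ∈ K} := by
    intro c
    refine ⟨?_, ?_, ?_⟩
    · simp [Set.mem_setOf_eq, smul_bot, hbot]
    · intro m n hm hn
      simp only [Set.mem_setOf_eq, HM.smul_sup] at *
      exact hsup _ _ hm hn
    · intro m n hn hmn
      exact hdown _ _ hn (HM.smul_mono_right _ hmn)
  refine ⟨hered, ?_, ?_, ?_, ?_⟩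
  · intro c d
    ext m
    simp only [Set.mem_inter_iff, Set.mem_setOf_eq, compl_inf, HM.sup_smul]
    constructor
    · exact fun ⟨h1, h2⟩ => hsup _ _ h1 h2
    · exact fun h => ⟨hdown _ _ h le_sup_left, hdown _ _ h le_sup_right⟩
  · intro c d
    ext m
    simp only [Set.mem_setOf_eq, compl_sup, compl_compl, ← HM.inf_smul]
    rw [inf_comm]
  · ext m
    simp [HM.top_smul]
  · intro K' hH hInt hRes c
    have := hRes cᶜ ⊥
    simp only [himp_bot, compl_compl] at this
    exact this.symm
end

section
/- Let H be a finite Heyting algebra. The category of Heyting modules over H has finite biproducts: for Heyting modules M and N, the componentwise structure on M × N makes it simultaneously a product (via the projections) and a coproduct (via the inclusions m ↦ (m,0), n ↦ (0,n)), where the morphism out of the coproduct induced by f : M → Y and g : N → Y is (m,n) ↦ f(m) ∨ g(n). -/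
universe u

/-- The componentwise distributive module structure on `M × N`. -/
def DistribModule.prod {L : Type u} [Lattice L] [OrderTop L] [OrderBot L]
    {M N : Type u} [SemilatticeSup M] [OrderBot M] [SemilatticeSup N] [OrderBot N]
    (DM : DistribModule L M) (DN : DistribModule L N) : DistribModule L (M × N) where
  smul c p := (DM.smul c p.1, DN.smul c p.2)
  smul_mono_left _ _ m h := ⟨DM.smul_mono_left m.1 h, DN.smul_mono_left m.2 h⟩
  smul_mono_right x _ _ h := ⟨DM.smul_mono_right x h.1, DN.smul_mono_right x h.2⟩
  top_smul m := Prod.ext_iff.mpr ⟨DM.top_smul m.1, DN.top_smul m.2⟩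
  bot_smul m := Prod.ext_iff.mpr ⟨DM.bot_smul m.1, DN.bot_smul m.2⟩
  inf_smul x y m := Prod.ext_iff.mpr ⟨DM.inf_smul x y m.1, DN.inf_smul x y m.2⟩
  sup_smul x y m := Prod.ext_iff.mpr ⟨DM.sup_smul x y m.1, DN.sup_smul x y m.2⟩
  smul_sup x m n := Prod.ext_iff.mpr ⟨DM.smul_sup x m.1 n.1, DN.smul_sup x m.2 n.2⟩

lemma smul_bot_aux {L : Type u} [Lattice L] [OrderTop L] [OrderBot L]
    {M : Type u} [SemilatticeSup M] [OrderBot M] (DM : DistribModule L M) (x : L) :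
    DM.smul x ⊥ = ⊥ := by
  refine le_antisymm ?_ bot_le
  calc DM.smul x ⊥ ≤ DM.smul ⊤ ⊥ := DM.smul_mono_left _ le_top
  _ = ⊥ := DM.top_smul ⊥

/-- Over a finite Heyting algebra, `M × N` with the componentwise structure is
simultaneously a product and a coproduct of the Heyting modules `M` and `N`. -/
theorem biproduct_heytingModules (H : Type u) [HeytingAlgebra H] [Fintype H]
    (M N : Type u) [SemilatticeSup M] [OrderBot M] [SemilatticeSup N] [OrderBot N]
    (HM : HeytingModule H M) (HN : HeytingModule H N) :
    IsHom (HM.toDistribModule.prod HN.toDistribModule) HM.toDistribModule Prod.fst ∧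
    IsHom (HM.toDistribModule.prod HN.toDistribModule) HN.toDistribModule Prod.snd ∧
    IsHom HM.toDistribModule (HM.toDistribModule.prod HN.toDistribModule)
      (fun m : M => ((m, ⊥) : M × N)) ∧
    IsHom HN.toDistribModule (HM.toDistribModule.prod HN.toDistribModule)
      (fun n : N => ((⊥, n) : M × N)) ∧
    (∀ (X : Type u) [SemilatticeSup X] [OrderBot X], ∀ (HX : HeytingModule H X)
        (f : X → M) (g : X → N),
        IsHom HX.toDistribModule HM.toDistribModule f →
        IsHom HX.toDistribModule HN.toDistribModule g →
        ∃! h : X → M × N,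
          IsHom HX.toDistribModule (HM.toDistribModule.prod HN.toDistribModule) h ∧
            Prod.fst ∘ h = f ∧ Prod.snd ∘ h = g) ∧
    ∀ (Y : Type u) [SemilatticeSup Y] [OrderBot Y], ∀ (HY : HeytingModule H Y)
        (f : M → Y) (g : N → Y),
        IsHom HM.toDistribModule HY.toDistribModule f →
        IsHom HN.toDistribModule HY.toDistribModule g →
        (IsHom (HM.toDistribModule.prod HN.toDistribModule) HY.toDistribModule
            (fun p : M × N => f p.1 ⊔ g p.2) ∧
          (∀ m : M, f m ⊔ g ⊥ = f m) ∧ (∀ n : N, f ⊥ ⊔ g n = g n)) ∧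
          ∀ h : M × N → Y,
            IsHom (HM.toDistribModule.prod HN.toDistribModule) HY.toDistribModule h →
            (∀ m : M, h (m, ⊥) = f m) → (∀ n : N, h (⊥, n) = g n) →
            h = fun p : M × N => f p.1 ⊔ g p.2 := by
  refine ⟨⟨rfl, fun _ _ => rfl, fun _ _ => rfl⟩,
    ⟨rfl, fun _ _ => rfl, fun _ _ => rfl⟩,
    ⟨rfl, fun m m' => by simp, fun x m => by
      simp [DistribModule.prod, smul_bot_aux]⟩,
    ⟨rfl, fun n n' => by simp, fun x n => by
      simp [DistribModule.prod, smul_bot_aux]⟩, ?_, ?_⟩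
  · intro X _ _ HX f g hf hg
    refine ⟨fun x => (f x, g x), ⟨⟨?_, ?_, ?_⟩, rfl, rfl⟩, ?_⟩
    · exact Prod.ext_iff.mpr ⟨hf.1, hg.1⟩
    · intro m m'; exact Prod.ext_iff.mpr ⟨hf.2.1 m m', hg.2.1 m m'⟩
    · intro x m; exact Prod.ext_iff.mpr ⟨hf.2.2 x m, hg.2.2 x m⟩
    · rintro h ⟨_, rfl, rfl⟩; rfl
  · intro Y _ _ HY f g hf hg
    refine ⟨⟨⟨?_, ?_, ?_⟩, ?_, ?_⟩, ?_⟩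
    · show f ⊥ ⊔ g ⊥ = ⊥; rw [hf.1, hg.1, sup_idem]
    · intro m m'
      show f (m.1 ⊔ m'.1) ⊔ g (m.2 ⊔ m'.2) = _
      rw [hf.2.1, hg.2.1]
      exact sup_sup_sup_comm _ _ _ _
    · intro x m
      show f (HM.smul x m.1) ⊔ g (HN.smul x m.2) = _
      rw [hf.2.2, hg.2.2, HY.smul_sup]
    · intro m; rw [hg.1, sup_bot_eq]
    · intro n; rw [hf.1, bot_sup_eq]
    · intro h hh h1 h2
      funext p
      have : p = (p.1, (⊥ : N)) ⊔ ((⊥ : M), p.2) := by simp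
      calc h p = h ((p.1, (⊥:N)) ⊔ ((⊥:M), p.2)) := by rw [← this]
      _ = h (p.1, ⊥) ⊔ h (⊥, p.2) := hh.2.1 _ _
      _ = f p.1 ⊔ g p.2 := by rw [h1, h2]
end
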